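/- arXiv:2405.00082 — 2 statements merged into one kernel-verified Lean document; each statement's English description precedes it below -/
import Mathlib

section
/- L²-local-norm commutator bound (Lemma 3.5). There is a universal constant C such that for every n, every k-local Hamiltonian H = Σ_a λ_a E_a and every k'-local Hamiltonian G = Σ_b κ_b F_b on n qubits, one has ‖[H,G]‖_F ≤ C·(4(k'+k))^{3k}·‖H‖₍₂₎·‖G‖_F and ‖[H,G]‖₍₂₎ ≤ C·(4(k'+k))^{3k}·‖H‖₍₂₎·‖G‖₍₂₎. -/
open Complex Matrix
open scoped BigOperators Classical

noncomputable section

/-- The space of `n`-qubit operators, as matrices indexed by bit-strings. -/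
abbrev QMat (n : ℕ) := Matrix (Fin n → Fin 2) (Fin n → Fin 2) ℂ

/-- The single-qubit Pauli matrices, indexed so that `0 = σ_I`, `1 = σ_x`, `2 = σ_y`,
`3 = σ_z`. -/
def pauli1 (a : Fin 4) : Matrix (Fin 2) (Fin 2) ℂ :=
  if a = 0 then 1
  else if a = 1 then !![0, 1; 1, 0]
  else if a = 2 then !![0, -Complex.I; Complex.I, 0]
  else !![1, 0; 0, -1]

/-- The `n`-qubit Pauli (Kronecker product of single-qubit Paulis) described by
`p : Fin n → Fin 4`. -/
def PauliOp {n : ℕ} (p : Fin n → Fin 4) : QMat n :=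
  Matrix.of fun x y => ∏ i, pauli1 (p i) (x i) (y i)

/-- The support of a Pauli: the set of qubits where it acts non-trivially. -/
def psupp {n : ℕ} (p : Fin n → Fin 4) : Finset (Fin n) :=
  Finset.univ.filter fun i => p i ≠ 0

/-- Commutator `[A, B] = A*B - B*A`. -/
def cm {α : Type*} [Ring α] (A B : α) : α := A * B - B * A

/-- Frobenius norm of a complex square matrix. -/
def frobNorm {m : Type*} [Fintype m] (M : Matrix m m ℂ) : ℝ :=
  Real.sqrt (∑ x, ∑ y, ‖M x y‖ ^ 2)

/-- Matrix exponential. -/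
def mexp {m : Type*} [Fintype m] [DecidableEq m] (M : Matrix m m ℂ) : Matrix m m ℂ :=
  NormedSpace.exp M

/-- The coefficient of the Pauli `p` in the Pauli expansion `M = Σ_Q c_Q Q`. -/
def pauliCoeff {n : ℕ} (M : QMat n) (p : Fin n → Fin 4) : ℂ :=
  Matrix.trace (M * PauliOp p) / (2 ^ n : ℂ)

/-- The local norm `‖M‖₍₁₎ = max_i Σ_{Q : i ∈ supp(Q)} |c_Q|`. -/
def lonorm {n : ℕ} (M : QMat n) : ℝ :=
  ⨆ i : Fin n, ∑ p : Fin n → Fin 4,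
    if i ∈ psupp p then ‖pauliCoeff M p‖ else 0

/-- The local norm `‖M‖₍₂₎ = max_i (Σ_{Q : i ∈ supp(Q)} |c_Q|²)^{1/2}`. -/
def ltnorm {n : ℕ} (M : QMat n) : ℝ :=
  ⨆ i : Fin n, Real.sqrt (∑ p : Fin n → Fin 4,
    if i ∈ psupp p then ‖pauliCoeff M p‖ ^ 2 else 0)

/-- `H` is the Hamiltonian `Σ_a λ_a E_a` with distinct non-identity Pauli terms. -/
def IsHamiltonian {n m : ℕ} (lam : Fin m → ℝ) (E : Fin m → Fin n → Fin 4) (H : QMat n) : Prop :=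
  Function.Injective E ∧ (∀ a, E a ≠ fun _ => 0) ∧ H = ∑ a, (lam a : ℂ) • PauliOp (E a)

/-- Every term of the Hamiltonian has support of size at most `k`. -/
def KLocal {n m : ℕ} (E : Fin m → Fin n → Fin 4) (k : ℕ) : Prop :=
  ∀ a, (psupp (E a)).card ≤ k

/-!
Expanding `H = ∑ λ_a E_a` and `G = ∑ κ_b F_b`, the coefficient `c_q` of `[H, G]` at a Pauli `q`
is a sum of `λ_a κ_b` times phases of modulus at most `2`, over the pairs `(a, b)` with
`E_a F_b ∝ q` that anticommute at some site. Within this fiber `b` is determined by `a`; group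
the pairs by the class `supp E_a ∩ supp q`, a set of at most `k` sites inside `supp q`, so
there are at most `(2(k+k')+1)^k` classes. Cauchy–Schwarz over the classes and then inside a
class bounds `|c_q|² / 4` by the number of classes times
`∑_s (∑_{supp E_a' ⊇ s} λ_a'²) (∑_{(a, b) in class s} κ_b²)`.
After summing over `q` and exchanging sums, a pair `(a', b)` allows at most `(4(k+k')+1)^k`
terms `E_a`, since `E_a` is a Pauli of weight at most `k` on `supp E_a' ∪ supp F_b`; moreover
`E_a'` and `F_b` overlap, at the anticommuting site. A union bound over the sites of `F_b`
then gives `k' ‖H‖₍₂₎² ∑ κ_b²`; for the coefficients acting on a qubit `i`, the qubit lies in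
`supp E_a'` or in `supp F_b`, which gives `(k + k') ‖H‖₍₂₎² ‖G‖₍₂₎²`. Parseval converts these
coefficient sums into the two norms.
-/

open Finset

section PiKron

variable {ι α R : Type*} [Fintype ι] [CommSemiring R]

def piKron (A : ι → Matrix α α R) : Matrix (ι → α) (ι → α) R :=
  Matrix.of fun x y => ∏ i, A i (x i) (y i)

theorem piKron_mul_piKron [DecidableEq ι] [Fintype α] (A B : ι → Matrix α α R) :
    piKron A * piKron B = piKron (A * B) := by
  ext x y
  simp only [piKron, mul_apply, of_apply, ← prod_mul_distrib, Pi.mul_apply]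
  exact (Fintype.prod_sum fun i c => A i (x i) c * B i c (y i)).symm

theorem trace_piKron [DecidableEq ι] [Fintype α] (A : ι → Matrix α α R) :
    trace (piKron A) = ∏ i, trace (A i) := by
  simp only [trace, Matrix.diag, piKron]
  exact (Fintype.prod_sum fun i c => A i c c).symm

theorem piKron_smul (c : ι → R) (A : ι → Matrix α α R) :
    piKron (c • A) = (∏ i, c i) • piKron A := by
  ext x y
  simp [piKron, prod_mul_distrib]

theorem conjTranspose_piKron [StarRing R] (A : ι → Matrix α α R) :
    (piKron A)ᴴ = piKron fun i => (A i)ᴴ := by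
  ext x y
  simp [piKron, star_prod]

end PiKron

section PauliAlgebra

def pauliLabelMul (a b : Fin 4) : Fin 4 :=
  ![![0, 1, 2, 3], ![1, 0, 3, 2], ![2, 3, 0, 1], ![3, 2, 1, 0]] a b

def pauliPhaseExp (a b : Fin 4) : ℕ :=
  ![![0, 0, 0, 0], ![0, 0, 1, 3], ![0, 3, 0, 1], ![0, 1, 3, 0]] a b

theorem pauli1_mul (a b : Fin 4) :
    pauli1 a * pauli1 b = I ^ pauliPhaseExp a b • pauli1 (pauliLabelMul a b) := by
  fin_cases a <;> fin_cases b <;>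
    ext i j <;> fin_cases i <;> fin_cases j <;>
    simp [pauli1, pauliLabelMul, pauliPhaseExp, mul_apply, Fin.sum_univ_two, pow_succ]

theorem conjTranspose_pauli1 (a : Fin 4) : (pauli1 a)ᴴ = pauli1 a := by
  fin_cases a <;> ext i j <;> fin_cases i <;> fin_cases j <;> simp [pauli1]

theorem trace_pauli1_mul (a b : Fin 4) :
    trace (pauli1 a * pauli1 b) = if a = b then 2 else 0 := by
  fin_cases a <;> fin_cases b <;> simp +decide [pauli1, trace, Fin.sum_univ_two] <;> norm_num

theorem pauliLabelMul_comm (a b : Fin 4) : pauliLabelMul a b = pauliLabelMul b a := by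
  fin_cases a <;> fin_cases b <;> rfl

theorem pauliLabelMul_left_cancel (a b : Fin 4) : pauliLabelMul a (pauliLabelMul a b) = b := by
  fin_cases a <;> fin_cases b <;> rfl

theorem pauliLabelMul_eq_zero_iff {a b : Fin 4} : pauliLabelMul a b = 0 ↔ a = b := by
  fin_cases a <;> fin_cases b <;> decide

theorem pauliPhaseExp_comm_of_commute {a b : Fin 4} (h : ¬(a ≠ 0 ∧ b ≠ 0 ∧ a ≠ b)) :
    pauliPhaseExp a b = pauliPhaseExp b a := by
  fin_cases a <;> fin_cases b <;> simp_all [pauliPhaseExp]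

variable {n : ℕ}

def pauliStringMul (p q : Fin n → Fin 4) : Fin n → Fin 4 := fun i => pauliLabelMul (p i) (q i)

def pauliStringPhase (p q : Fin n → Fin 4) : ℂ := ∏ i, I ^ pauliPhaseExp (p i) (q i)

theorem PauliOp_eq_piKron (p : Fin n → Fin 4) : PauliOp p = piKron fun i => pauli1 (p i) := rfl

theorem PauliOp_mul (p q : Fin n → Fin 4) :
    PauliOp p * PauliOp q = pauliStringPhase p q • PauliOp (pauliStringMul p q) := by
  simp only [PauliOp_eq_piKron, piKron_mul_piKron, pauliStringPhase, pauliStringMul, ← piKron_smul]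
  congr 1
  funext i
  exact pauli1_mul _ _

theorem conjTranspose_PauliOp (p : Fin n → Fin 4) : (PauliOp p)ᴴ = PauliOp p := by
  simp only [PauliOp_eq_piKron, conjTranspose_piKron, conjTranspose_pauli1]

theorem trace_PauliOp_mul (p q : Fin n → Fin 4) :
    trace (PauliOp p * PauliOp q) = if p = q then 2 ^ n else 0 := by
  simp only [PauliOp_eq_piKron, piKron_mul_piKron, trace_piKron, Pi.mul_apply, trace_pauli1_mul,
    prod_ite_zero, funext_iff, prod_const, card_univ, Fintype.card_fin, mem_univ,
    true_implies]

theorem norm_pauliStringPhase (p q : Fin n → Fin 4) : ‖pauliStringPhase p q‖ = 1 := by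
  simp [pauliStringPhase]

theorem mem_psupp {p : Fin n → Fin 4} {j : Fin n} : j ∈ psupp p ↔ p j ≠ 0 := by
  simp [psupp]

theorem psupp_pauliStringMul_subset (p q : Fin n → Fin 4) :
    psupp (pauliStringMul p q) ⊆ psupp p ∪ psupp q := by
  intro j hj
  by_contra h
  simp only [mem_union, mem_psupp, not_or, not_not] at h
  simp [mem_psupp, pauliStringMul, h.1, h.2, pauliLabelMul] at hj

end PauliAlgebra

section Commutator

variable {n : ℕ}

def HasAnticommutingSite (p q : Fin n → Fin 4) : Prop :=
  ∃ j, p j ≠ 0 ∧ q j ≠ 0 ∧ p j ≠ q j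

def commPhase (p q : Fin n → Fin 4) : ℂ := pauliStringPhase p q - pauliStringPhase q p

theorem cm_PauliOp (p q : Fin n → Fin 4) :
    cm (PauliOp p) (PauliOp q) = commPhase p q • PauliOp (pauliStringMul p q) := by
  have : pauliStringMul q p = pauliStringMul p q := funext fun i => pauliLabelMul_comm _ _
  rw [cm, PauliOp_mul, PauliOp_mul, this, commPhase, sub_smul]

theorem norm_commPhase_le (p q : Fin n → Fin 4) : ‖commPhase p q‖ ≤ 2 := by
  calc ‖commPhase p q‖ ≤ ‖pauliStringPhase p q‖ + ‖pauliStringPhase q p‖ := norm_sub_le _ _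
    _ = 2 := by rw [norm_pauliStringPhase, norm_pauliStringPhase]; norm_num

theorem commPhase_eq_zero {p q : Fin n → Fin 4} (h : ¬HasAnticommutingSite p q) :
    commPhase p q = 0 := by
  rw [commPhase, sub_eq_zero, pauliStringPhase, pauliStringPhase]
  refine prod_congr rfl fun j _ => ?_
  rw [pauliPhaseExp_comm_of_commute (not_exists.mp h j)]

end Commutator

section PauliExpansion

variable {n : ℕ}

theorem trace_mul_PauliOp (M : QMat n) (p : Fin n → Fin 4) :
    trace (M * PauliOp p) = 2 ^ n * pauliCoeff M p := by
  rw [pauliCoeff, mul_div_cancel₀ _ (pow_ne_zero _ two_ne_zero)]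

theorem pauliCoeff_sum_smul {ι : Type*} (s : Finset ι) (c : ι → ℂ) (f : ι → Fin n → Fin 4)
    (q : Fin n → Fin 4) :
    pauliCoeff (∑ i ∈ s, c i • PauliOp (f i)) q = ∑ i ∈ s with f i = q, c i := by
  simp only [pauliCoeff, Matrix.sum_mul, trace_sum, smul_mul, trace_smul, trace_PauliOp_mul,
    smul_eq_mul, mul_ite, mul_zero, sum_ite, sum_const_zero, add_zero, ← sum_mul,
    mul_div_cancel_right₀ _ (pow_ne_zero n (two_ne_zero : (2 : ℂ) ≠ 0))]

theorem sum_norm_sq_apply_eq_of_eq_sum {ι : Type*} {M : QMat n} {s : Finset ι} {c : ι → ℂ}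
    {f : ι → Fin n → Fin 4} (hM : M = ∑ i ∈ s, c i • PauliOp (f i)) :
    ∑ x, ∑ y, ‖M x y‖ ^ 2 = 2 ^ n * ∑ p, ‖pauliCoeff M p‖ ^ 2 := by
  have hMH : Mᴴ = ∑ i ∈ s, star (c i) • PauliOp (f i) := by
    simp [hM, conjTranspose_sum, conjTranspose_smul, conjTranspose_PauliOp]
  have htrace : trace (M * Mᴴ) = ∑ x, ∑ y, (‖M x y‖ : ℂ) ^ 2 := by
    simp only [trace, Matrix.diag, mul_apply, conjTranspose_apply, Complex.star_def,
      Complex.mul_conj']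
  have hcoeff : trace (M * Mᴴ) = 2 ^ n * ∑ p, (‖pauliCoeff M p‖ : ℂ) ^ 2 := by
    rw [hMH, Matrix.mul_sum, trace_sum, ← sum_fiberwise s f, mul_sum]
    refine sum_congr rfl fun p _ => ?_
    have : star (pauliCoeff M p) = ∑ i ∈ s with f i = p, star (c i) := by
      rw [hM, pauliCoeff_sum_smul, star_sum]
    rw [← Complex.mul_conj', ← Complex.star_def, this, mul_sum, mul_sum]
    refine sum_congr rfl fun i hi => ?_
    rw [mul_smul_comm, trace_smul, trace_mul_PauliOp, (mem_filter.mp hi).2, smul_eq_mul]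
    ring
  exact_mod_cast htrace.symm.trans hcoeff

theorem frobNorm_sq_eq {ι : Type*} {M : QMat n} {s : Finset ι} {c : ι → ℂ}
    {f : ι → Fin n → Fin 4} (hM : M = ∑ i ∈ s, c i • PauliOp (f i)) :
    frobNorm M ^ 2 = 2 ^ n * ∑ p, ‖pauliCoeff M p‖ ^ 2 := by
  rw [frobNorm, Real.sq_sqrt (by positivity), sum_norm_sq_apply_eq_of_eq_sum hM]

/-- `ltnorm M = ⨆ i, √(localWeight M i)`. -/
def localWeight (M : QMat n) (i : Fin n) : ℝ :=
  ∑ p, if i ∈ psupp p then ‖pauliCoeff M p‖ ^ 2 else 0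

theorem ltnorm_nonneg (M : QMat n) : 0 ≤ ltnorm M :=
  Real.iSup_nonneg fun _ => Real.sqrt_nonneg _

theorem localWeight_le_ltnorm_sq (M : QMat n) (i : Fin n) : localWeight M i ≤ ltnorm M ^ 2 := by
  refine (Real.sqrt_le_left (ltnorm_nonneg M)).mp ?_
  exact le_ciSup (f := fun i => √(localWeight M i)) (Set.finite_range _).bddAbove i

theorem ltnorm_le {M : QMat n} {B : ℝ} (hB : 0 ≤ B) (h : ∀ i, localWeight M i ≤ B ^ 2) :
    ltnorm M ≤ B := by
  rcases isEmpty_or_nonempty (Fin n) with _ | _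
  · rw [ltnorm, Real.iSup_of_isEmpty]; exact hB
  · exact ciSup_le fun i => Real.sqrt_le_iff.mpr ⟨hB, h i⟩

end PauliExpansion

namespace IsHamiltonian

variable {n m : ℕ} {lam : Fin m → ℝ} {E : Fin m → Fin n → Fin 4} {H : QMat n}

theorem sum_pauliCoeff (hH : IsHamiltonian lam E H) (g : (Fin n → Fin 4) → ℝ → ℝ)
    (hg : ∀ p, g p 0 = 0) : ∑ p, g p (‖pauliCoeff H p‖ ^ 2) = ∑ a, g (E a) (lam a ^ 2) := by
  obtain ⟨hE, -, rfl⟩ := hH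
  refine (Fintype.sum_of_injective E hE _ _ (fun p hp => ?_) fun a => ?_).symm
  · rw [pauliCoeff_sum_smul, filter_false_of_mem fun a _ ha => hp ⟨a, ha⟩]
    simp [hg]
  · have : ({a' | E a' = E a} : Finset (Fin m)) = {a} := by ext; simp [hE.eq_iff]
    rw [pauliCoeff_sum_smul, this, sum_singleton, Complex.norm_real, Real.norm_eq_abs, sq_abs]

theorem localWeight_eq (hH : IsHamiltonian lam E H) (j : Fin n) :
    localWeight H j = ∑ a, if j ∈ psupp (E a) then lam a ^ 2 else 0 :=
  hH.sum_pauliCoeff (fun p r => if j ∈ psupp p then r else 0) fun _ => ite_self 0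

theorem frobNorm_sq (hH : IsHamiltonian lam E H) : frobNorm H ^ 2 = 2 ^ n * ∑ a, lam a ^ 2 := by
  rw [frobNorm_sq_eq hH.2.2, hH.sum_pauliCoeff (fun _ r => r) fun _ => rfl]

theorem eq_zero_of_kLocal_zero (hH : IsHamiltonian lam E H) (hk : KLocal E 0) : H = 0 := by
  obtain ⟨-, hE0, rfl⟩ := hH
  have hsupp (a : Fin m) : psupp (E a) = ∅ := card_eq_zero.mp (Nat.le_zero.mp (hk a))
  have : IsEmpty (Fin m) := ⟨fun a => hE0 a (funext fun j => by
    simpa using filter_eq_empty_iff.mp (hsupp a) (mem_univ j))⟩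
  simp

end IsHamiltonian

section Counting

variable {ι β : Type*} [Fintype ι] [DecidableEq ι] [Fintype β] [DecidableEq β] [Zero β]

omit [Fintype ι] [Fintype β] in
theorem filter_update_zero_ne_zero (f : ι → β) (s : Finset ι) (i : ι) :
    {j ∈ s | Function.update f i 0 j ≠ 0} = {j ∈ s | f j ≠ 0}.erase i := by
  ext j
  by_cases hj : j = i <;> simp [Function.update_apply, hj]

/-- Zeroing one nonzero value of a function with at most `k + 1` nonzero values inside `W` leaves
one with at most `k`; this gives the factor `card β * #W + 1` per unit of `k`. -/
theorem card_sparse_le (W : Finset ι) (k : ℕ) :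
    #{f : ι → β | ({i | f i ≠ 0} : Finset ι) ⊆ W ∧ #{i | f i ≠ 0} ≤ k}
      ≤ (Fintype.card β * #W + 1) ^ k := by
  induction k with
  | zero =>
    refine card_le_one.mpr fun f hf g hg => ?_
    simp only [mem_filter, mem_univ, true_and, Nat.le_zero, card_eq_zero,
      filter_eq_empty_iff, not_not, forall_const] at hf hg
    exact funext fun i => by rw [hf.2, hg.2]
  | succ k ih =>
    set S : ℕ → Finset (ι → β) :=
      fun k => {f | ({i | f i ≠ 0} : Finset ι) ⊆ W ∧ #{i | f i ≠ 0} ≤ k}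
    have hsub : S (k + 1) ⊆
        S k ∪ (W ×ˢ (univ ×ˢ S k)).image fun x => Function.update x.2.2 x.1 x.2.1 := by
      intro f hf
      simp only [S, mem_filter, mem_univ, true_and] at hf
      rcases le_or_gt #{i | f i ≠ 0} k with hk | hk
      · exact mem_union_left _ (by simpa [S] using ⟨hf.1, hk⟩)
      obtain ⟨i, hi⟩ : ({i | f i ≠ 0} : Finset ι).Nonempty := card_pos.mp (by omega)
      refine mem_union_right _ (mem_image.mpr ⟨(i, f i, Function.update f i 0), ?_, by simp⟩)
      have hsupp := filter_update_zero_ne_zero f univ i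
      simp only [mem_product, mem_univ, true_and, S, mem_filter, hsupp, card_erase_of_mem hi]
      exact ⟨hf.1 hi, (erase_subset _ _).trans hf.1, by omega⟩
    calc #(S (k + 1)) ≤ #(S k) + #W * (Fintype.card β * #(S k)) := by
          refine (card_le_card hsub).trans ((card_union_le _ _).trans ?_)
          gcongr
          exact card_image_le.trans_eq (by rw [card_product, card_product, card_univ])
      _ = (Fintype.card β * #W + 1) * #(S k) := by ring
      _ ≤ (Fintype.card β * #W + 1) ^ (k + 1) := by
          rw [pow_succ']; exact Nat.mul_le_mul_left _ ih

omit [DecidableEq β] [Zero β] in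
theorem card_subsets_le (W : Finset ι) (k : ℕ) :
    #{s : Finset ι | s ⊆ W ∧ #s ≤ k} ≤ (2 * #W + 1) ^ k := by
  have hsupp (s : Finset ι) : ({i | (if i ∈ s then 1 else 0 : Fin 2) ≠ 0} : Finset ι) = s := by
    ext i; by_cases hi : i ∈ s <;> simp [hi]
  refine le_trans (card_le_card_of_injOn (fun s i => if i ∈ s then (1 : Fin 2) else 0)
    (fun s hs => ?_) fun s _ t _ hst => ?_) ((card_sparse_le W k).trans_eq (by simp))
  · simpa [hsupp] using hs
  · simpa [hsupp] using congrArg (fun g : ι → Fin 2 => ({i | g i ≠ 0} : Finset ι)) hst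

end Counting

section UnionBound

variable {ι κ α : Type*} [Fintype ι] [Fintype κ] [DecidableEq α]

theorem sum_ite_not_disjoint_le (S : ι → Finset α) {μ : ι → ℝ} (hμ : ∀ a, 0 ≤ μ a) {L : ℝ}
    (hL : ∀ j, ∑ a, (if j ∈ S a then μ a else 0) ≤ L) (T : Finset α) :
    ∑ a, (if ¬Disjoint (S a) T then μ a else 0) ≤ #T * L := by
  have hnonneg (a : ι) (j : α) : 0 ≤ if j ∈ S a then μ a else 0 := by
    split_ifs <;> simp [hμ]
  calc ∑ a, (if ¬Disjoint (S a) T then μ a else 0)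
      ≤ ∑ a, ∑ j ∈ T, if j ∈ S a then μ a else 0 := by
        refine sum_le_sum fun a _ => ?_
        by_cases h : Disjoint (S a) T
        · simpa [h] using sum_nonneg fun j (_ : j ∈ T) => hnonneg a j
        · obtain ⟨j, hjS, hjT⟩ := not_disjoint_iff.mp h
          simpa [h, hjS] using single_le_sum (fun j _ => hnonneg a j) hjT
    _ = ∑ j ∈ T, ∑ a, if j ∈ S a then μ a else 0 := sum_comm
    _ ≤ #T * L := by
        simpa [nsmul_eq_mul] using sum_le_sum fun j (_ : j ∈ T) => hL j

theorem sum_sum_ite_not_disjoint_le (S : ι → Finset α) (T : κ → Finset α) {μ : ι → ℝ}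
    {ν : κ → ℝ} (hμ : ∀ a, 0 ≤ μ a) (hν : ∀ b, 0 ≤ ν b) {L : ℝ} (hL0 : 0 ≤ L)
    (hL : ∀ j, ∑ a, (if j ∈ S a then μ a else 0) ≤ L) {K : ℕ} (hT : ∀ b, #(T b) ≤ K)
    (Q : κ → Prop) [DecidablePred Q] :
    ∑ a, ∑ b, (if ¬Disjoint (S a) (T b) ∧ Q b then μ a * ν b else 0)
      ≤ K * L * ∑ b, if Q b then ν b else 0 := by
  rw [sum_comm, mul_sum]
  refine sum_le_sum fun b _ => ?_
  split_ifs with hQ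
  · calc ∑ a, (if ¬Disjoint (S a) (T b) ∧ Q b then μ a * ν b else 0)
          = (∑ a, if ¬Disjoint (S a) (T b) then μ a else 0) * ν b := by
            simp [hQ, sum_mul, ite_mul]
        _ ≤ K * L * ν b := by
            gcongr
            · exact hν b
            · exact (sum_ite_not_disjoint_le S hμ hL (T b)).trans
                (mul_le_mul_of_nonneg_right (by exact_mod_cast hT b) hL0)
  · simp [hQ]

end UnionBound

section Pairs

variable {n m m' k k' : ℕ} (E : Fin m → Fin n → Fin 4) (F : Fin m' → Fin n → Fin 4)

def pairProd (x : Fin m × Fin m') : Fin n → Fin 4 := pauliStringMul (E x.1) (F x.2)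

/-- The pairs feeding one Pauli coefficient of `[H, G]` are grouped by this class. -/
def pairClass (x : Fin m × Fin m') : Finset (Fin n) := psupp (E x.1) ∩ psupp (pairProd E F x)

def anticommPairs : Finset (Fin m × Fin m') := {x | HasAnticommutingSite (E x.1) (F x.2)}

def weightAbove (lam : Fin m → ℝ) (s : Finset (Fin n)) : ℝ :=
  ∑ a, if s ⊆ psupp (E a) then lam a ^ 2 else 0

theorem pairClass_subset_psupp_left (x : Fin m × Fin m') : pairClass E F x ⊆ psupp (E x.1) :=
  inter_subset_left

theorem pairClass_subset_psupp_pairProd (x : Fin m × Fin m') :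
    pairClass E F x ⊆ psupp (pairProd E F x) :=
  inter_subset_right

theorem card_psupp_pairProd_le (hEk : KLocal E k) (hFk : KLocal F k') (x : Fin m × Fin m') :
    #(psupp (pairProd E F x)) ≤ k + k' :=
  (card_le_card (psupp_pauliStringMul_subset _ _)).trans
    ((card_union_le _ _).trans (add_le_add (hEk _) (hFk _)))

theorem psupp_subset_pairClass_union (x : Fin m × Fin m') :
    psupp (E x.1) ⊆ pairClass E F x ∪ psupp (F x.2) := by
  intro j hj
  by_contra h
  simp only [pairClass, mem_union, mem_inter, hj, true_and, not_or, mem_psupp, not_not,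
    pairProd, pauliStringMul, pauliLabelMul_eq_zero_iff] at h
  exact mem_psupp.mp hj (h.1.trans h.2)

theorem mem_pairClass_of_notMem {x : Fin m × Fin m'} {j : Fin n}
    (hj : j ∈ psupp (pairProd E F x)) (hjF : j ∉ psupp (F x.2)) : j ∈ pairClass E F x := by
  refine mem_inter.mpr ⟨mem_psupp.mpr fun hE => ?_, hj⟩
  simp_all [mem_psupp, pairProd, pauliStringMul, pauliLabelMul]

theorem exists_mem_pairClass_of_mem_anticommPairs {x : Fin m × Fin m'}
    (hx : x ∈ anticommPairs E F) : ∃ j ∈ pairClass E F x, j ∈ psupp (F x.2) := by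
  obtain ⟨j, hE, hF, hEF⟩ := (mem_filter.mp hx).2
  refine ⟨j, mem_inter.mpr ⟨mem_psupp.mpr hE, mem_psupp.mpr ?_⟩, mem_psupp.mpr hF⟩
  simpa [pairProd, pauliStringMul, pauliLabelMul_eq_zero_iff] using hEF

theorem eq_of_pairProd_eq (hF : Function.Injective F) {x y : Fin m × Fin m'}
    (hxy : pairProd E F x = pairProd E F y) (h1 : x.1 = y.1) : x = y := by
  refine Prod.ext h1 (hF (funext fun j => ?_))
  have := congrFun hxy j
  simp only [pairProd, pauliStringMul, h1] at this
  rw [← pauliLabelMul_left_cancel (E y.1 j) (F x.2 j), this, pauliLabelMul_left_cancel]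

variable {E F}

theorem sq_sum_le_weightAbove_mul (hF : Function.Injective F) (lam : Fin m → ℝ)
    (kap : Fin m' → ℝ) {X : Finset (Fin m × Fin m')} {q : Fin n → Fin 4} {s : Finset (Fin n)}
    (hX : ∀ x ∈ X, pairProd E F x = q ∧ pairClass E F x = s) :
    (∑ x ∈ X, |lam x.1| * |kap x.2|) ^ 2 ≤ weightAbove E lam s * ∑ x ∈ X, kap x.2 ^ 2 := by
  refine (sum_mul_sq_le_sq_mul_sq X (fun x => |lam x.1|) fun x => |kap x.2|).trans ?_
  simp only [sq_abs]
  gcongr ?_ * _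
  have hinj : Set.InjOn Prod.fst X := fun x hx y hy h =>
    eq_of_pairProd_eq E F hF ((hX x hx).1.trans (hX y hy).1.symm) h
  rw [← sum_image (f := fun a => lam a ^ 2) hinj, weightAbove, ← sum_filter]
  refine sum_le_sum_of_subset_of_nonneg (fun a ha => ?_) fun _ _ _ => sq_nonneg _
  obtain ⟨x, hx, rfl⟩ := mem_image.mp ha
  simpa [← (hX x hx).2] using pairClass_subset_psupp_left E F x

theorem card_image_pairClass_le (hEk : KLocal E k) (hFk : KLocal F k')
    {X : Finset (Fin m × Fin m')} {q : Fin n → Fin 4} (hX : ∀ x ∈ X, pairProd E F x = q) :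
    #(X.image (pairClass E F)) ≤ (2 * (k + k') + 1) ^ k := by
  rcases X.eq_empty_or_nonempty with rfl | ⟨x₀, hx₀⟩
  · simp
  have hq : #(psupp q) ≤ k + k' := hX x₀ hx₀ ▸ card_psupp_pairProd_le E F hEk hFk x₀
  refine (card_le_card fun s hs => ?_).trans
    ((card_subsets_le (psupp q) k).trans (Nat.pow_le_pow_left (by omega) k))
  obtain ⟨x, hx, rfl⟩ := mem_image.mp hs
  simp only [mem_filter, mem_univ, true_and]
  exact ⟨hX x hx ▸ pairClass_subset_psupp_pairProd E F x,
    (card_le_card (pairClass_subset_psupp_left E F x)).trans (hEk _)⟩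

/-- Cauchy–Schwarz over the classes of a fiber, then within each class. -/
theorem sq_sum_fiber_le (hF : Function.Injective F) (hEk : KLocal E k) (hFk : KLocal F k')
    (lam : Fin m → ℝ) (kap : Fin m' → ℝ) {X : Finset (Fin m × Fin m')} {q : Fin n → Fin 4}
    (hX : ∀ x ∈ X, pairProd E F x = q) :
    (∑ x ∈ X, |lam x.1| * |kap x.2|) ^ 2
      ≤ (2 * (k + k') + 1) ^ k * ∑ x ∈ X, weightAbove E lam (pairClass E F x) * kap x.2 ^ 2 := by
  set S := X.image (pairClass E F)
  have hS : ∀ x ∈ X, pairClass E F x ∈ S := fun x hx => mem_image_of_mem _ hx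
  calc (∑ x ∈ X, |lam x.1| * |kap x.2|) ^ 2
      = (∑ s ∈ S, ∑ x ∈ X with pairClass E F x = s, |lam x.1| * |kap x.2|) ^ 2 := by
        rw [sum_fiberwise_of_maps_to hS]
    _ ≤ #S * ∑ s ∈ S, (∑ x ∈ X with pairClass E F x = s, |lam x.1| * |kap x.2|) ^ 2 :=
        sq_sum_le_card_mul_sum_sq
    _ ≤ (2 * (k + k') + 1) ^ k *
          ∑ s ∈ S, weightAbove E lam s * ∑ x ∈ X with pairClass E F x = s, kap x.2 ^ 2 := by
        gcongr with s
        · exact_mod_cast card_image_pairClass_le hEk hFk hX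
        · exact sq_sum_le_weightAbove_mul hF lam kap fun x hx =>
            ⟨hX x (mem_filter.mp hx).1, (mem_filter.mp hx).2⟩
    _ = (2 * (k + k') + 1) ^ k * ∑ x ∈ X, weightAbove E lam (pairClass E F x) * kap x.2 ^ 2 := by
        rw [← sum_fiberwise_of_maps_to hS]
        congr 1
        refine sum_congr rfl fun s _ => ?_
        rw [mul_sum]
        exact sum_congr rfl fun x hx => by rw [(mem_filter.mp hx).2]

/-- `E_a` lives inside `psupp (E a') ∪ psupp (F b)`, a set of at most `k + k'` sites. -/
theorem card_filter_pairClass_subset_le (hE : Function.Injective E) (hEk : KLocal E k)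
    (hFk : KLocal F k') (a' : Fin m) (b : Fin m') :
    #{x : Fin m × Fin m' | x.2 = b ∧ pairClass E F x ⊆ psupp (E a')}
      ≤ (4 * (k + k') + 1) ^ k := by
  set W := psupp (E a') ∪ psupp (F b)
  have hW : #W ≤ k + k' := (card_union_le _ _).trans (add_le_add (hEk a') (hFk b))
  refine (card_le_card_of_injOn (fun x => E x.1) (fun x hx => ?_) fun x hx y hy h => ?_).trans
    ((card_sparse_le W k).trans (by simp only [Fintype.card_fin]; gcongr))
  · obtain ⟨hxb, hx⟩ := (mem_filter.mp hx).2
    refine mem_filter.mpr ⟨mem_univ _, ?_, hEk x.1⟩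
    refine (psupp_subset_pairClass_union E F x).trans (union_subset_union hx ?_)
    rw [hxb]
  · exact Prod.ext (hE h) (((mem_filter.mp hx).2.1).trans ((mem_filter.mp hy).2.1).symm)

/-- Double counting: `weightAbove` unfolds to a sum over a second term `a'` of `H`. -/
theorem sum_weightAbove_le (hE : Function.Injective E) (hEk : KLocal E k) (hFk : KLocal F k')
    (lam : Fin m → ℝ) (kap : Fin m' → ℝ) (P : Finset (Fin m × Fin m'))
    (R : Fin m → Fin m' → Prop) [∀ a b, Decidable (R a b)]
    (hR : ∀ x ∈ P, ∀ a, pairClass E F x ⊆ psupp (E a) → R a x.2) :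
    ∑ x ∈ P, weightAbove E lam (pairClass E F x) * kap x.2 ^ 2
      ≤ (4 * (k + k') + 1) ^ k * ∑ a, ∑ b, if R a b then lam a ^ 2 * kap b ^ 2 else 0 := by
  have hcount (a : Fin m) (b : Fin m') :
      ∑ x ∈ P with x.2 = b, (if pairClass E F x ⊆ psupp (E a) then lam a ^ 2 * kap x.2 ^ 2 else 0)
        ≤ (4 * (k + k') + 1) ^ k * if R a b then lam a ^ 2 * kap b ^ 2 else 0 := by
    rw [← sum_filter, filter_filter]
    split_ifs with hab
    · rw [sum_congr rfl fun x hx => by rw [(mem_filter.mp hx).2.1], sum_const, nsmul_eq_mul]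
      gcongr
      exact_mod_cast (card_le_card (filter_subset_filter _ (subset_univ P))).trans
        (card_filter_pairClass_subset_le hE hEk hFk a b)
    · refine (sum_eq_zero fun x hx => (hab ?_).elim).le.trans (by simp)
      obtain ⟨hxP, hxb, hxa⟩ := mem_filter.mp hx
      exact hxb ▸ hR x hxP a hxa
  calc ∑ x ∈ P, weightAbove E lam (pairClass E F x) * kap x.2 ^ 2
      = ∑ a, ∑ b, ∑ x ∈ P with x.2 = b,
          (if pairClass E F x ⊆ psupp (E a) then lam a ^ 2 * kap x.2 ^ 2 else 0) := by
        simp only [sum_fiberwise]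
        rw [sum_comm]
        simp only [weightAbove, sum_mul, ite_mul, zero_mul]
    _ ≤ ∑ a, ∑ b, (4 * (k + k') + 1) ^ k * if R a b then lam a ^ 2 * kap b ^ 2 else 0 := by
        gcongr with a _ b _
        exact hcount a b
    _ = _ := by simp only [mul_sum]

end Pairs

section CommutatorBound

variable {n m m' k k' : ℕ} {lam : Fin m → ℝ} {kap : Fin m' → ℝ} {E : Fin m → Fin n → Fin 4}
  {F : Fin m' → Fin n → Fin 4} {H G : QMat n}

theorem cm_eq_sum (hH : IsHamiltonian lam E H) (hG : IsHamiltonian kap F G) :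
    cm H G = ∑ x : Fin m × Fin m',
      ((lam x.1 * kap x.2 : ℂ) * commPhase (E x.1) (F x.2)) • PauliOp (pairProd E F x) := by
  obtain ⟨-, -, rfl⟩ := hH
  obtain ⟨-, -, rfl⟩ := hG
  rw [Fintype.sum_prod_type, cm, sum_mul_sum, sum_mul_sum, sum_comm (s := univ) (t := univ)
    (f := fun b a => ((kap b : ℂ) • PauliOp (F b)) * ((lam a : ℂ) • PauliOp (E a))),
    ← sum_sub_distrib]
  refine sum_congr rfl fun a _ => ?_
  rw [← sum_sub_distrib]
  refine sum_congr rfl fun b _ => ?_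
  rw [smul_mul_smul_comm, smul_mul_smul_comm, mul_comm (kap b : ℂ), ← smul_sub, ← cm, cm_PauliOp,
    smul_smul]
  rfl

theorem norm_pauliCoeff_cm_le (hH : IsHamiltonian lam E H) (hG : IsHamiltonian kap F G)
    {q : Fin n → Fin 4} {P : Finset (Fin m × Fin m')}
    (hP : ∀ x ∈ anticommPairs E F, pairProd E F x = q → x ∈ P) :
    ‖pauliCoeff (cm H G) q‖ ≤ 2 * ∑ x ∈ P with pairProd E F x = q, |lam x.1| * |kap x.2| := by
  set t : Fin m × Fin m' → ℂ := fun x => (lam x.1 * kap x.2 : ℂ) * commPhase (E x.1) (F x.2)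
  have ht (x : Fin m × Fin m') : ‖t x‖ ≤ 2 * (|lam x.1| * |kap x.2|) := by
    simp only [t, norm_mul, Complex.norm_real, Real.norm_eq_abs]
    nlinarith [norm_commPhase_le (E x.1) (F x.2), abs_nonneg (lam x.1), abs_nonneg (kap x.2),
      mul_nonneg (abs_nonneg (lam x.1)) (abs_nonneg (kap x.2))]
  have ht0 (x : Fin m × Fin m') (hx : x ∉ anticommPairs E F) : t x = 0 := by
    simp [t, commPhase_eq_zero (by simpa [anticommPairs] using hx)]
  rw [cm_eq_sum hH hG, pauliCoeff_sum_smul, mul_sum]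
  calc ‖∑ x with pairProd E F x = q, t x‖ ≤ ∑ x with pairProd E F x = q, ‖t x‖ := norm_sum_le _ _
    _ = ∑ x ∈ {x | pairProd E F x = q} with x ∈ anticommPairs E F, ‖t x‖ :=
        (sum_filter_of_ne fun x _ h => by_contra fun hx => h (by rw [ht0 x hx, norm_zero])).symm
    _ ≤ ∑ x ∈ P with pairProd E F x = q, ‖t x‖ := by
        refine sum_le_sum_of_subset_of_nonneg (fun x hx => ?_) fun _ _ _ => norm_nonneg _
        simp only [mem_filter, mem_univ, true_and] at hx ⊢
        exact ⟨hP x hx.2 hx.1, hx.1⟩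
    _ ≤ _ := sum_le_sum fun x _ => ht x

end CommutatorBound

section MainBounds

variable {n m m' k k' : ℕ} {lam : Fin m → ℝ} {kap : Fin m' → ℝ} {E : Fin m → Fin n → Fin 4}
  {F : Fin m' → Fin n → Fin 4} {H G : QMat n}

theorem sum_sq_sum_fiber_le (hE : Function.Injective E) (hF : Function.Injective F)
    (hEk : KLocal E k) (hFk : KLocal F k') (lam : Fin m → ℝ) (kap : Fin m' → ℝ)
    (P : Finset (Fin m × Fin m')) (R : Fin m → Fin m' → Prop) [∀ a b, Decidable (R a b)]
    (hR : ∀ x ∈ P, ∀ a, pairClass E F x ⊆ psupp (E a) → R a x.2) :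
    ∑ q, (∑ x ∈ P with pairProd E F x = q, |lam x.1| * |kap x.2|) ^ 2
      ≤ (2 * (k + k') + 1) ^ k * (4 * (k + k') + 1) ^ k *
          ∑ a, ∑ b, if R a b then lam a ^ 2 * kap b ^ 2 else 0 := by
  calc ∑ q, (∑ x ∈ P with pairProd E F x = q, |lam x.1| * |kap x.2|) ^ 2
      ≤ ∑ q, (2 * (k + k') + 1) ^ k *
          ∑ x ∈ P with pairProd E F x = q, weightAbove E lam (pairClass E F x) * kap x.2 ^ 2 :=
        sum_le_sum fun q _ => sq_sum_fiber_le hF hEk hFk lam kap fun x hx => (mem_filter.mp hx).2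
    _ = (2 * (k + k') + 1) ^ k * ∑ x ∈ P, weightAbove E lam (pairClass E F x) * kap x.2 ^ 2 := by
        rw [← mul_sum, sum_fiberwise]
    _ ≤ _ := by
        rw [mul_assoc]
        gcongr
        exact sum_weightAbove_le hE hEk hFk lam kap P R hR

variable {L l : ℝ}

theorem sum_norm_sq_pauliCoeff_cm_le (hH : IsHamiltonian lam E H) (hG : IsHamiltonian kap F G)
    (hEk : KLocal E k) (hFk : KLocal F k') (hL0 : 0 ≤ L)
    (hL : ∀ j, ∑ a, (if j ∈ psupp (E a) then lam a ^ 2 else 0) ≤ L) :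
    ∑ q, ‖pauliCoeff (cm H G) q‖ ^ 2
      ≤ 4 * (2 * (k + k') + 1) ^ k * (4 * (k + k') + 1) ^ k * (k + k') * (L * ∑ b, kap b ^ 2) := by
  have hR : ∀ x ∈ anticommPairs E F, ∀ a, pairClass E F x ⊆ psupp (E a) →
      ¬Disjoint (psupp (E a)) (psupp (F x.2)) := fun x hx a ha => by
    obtain ⟨j, hjx, hjF⟩ := exists_mem_pairClass_of_mem_anticommPairs E F hx
    exact not_disjoint_iff.mpr ⟨j, ha hjx, hjF⟩
  have htouch := sum_sum_ite_not_disjoint_le (fun a => psupp (E a)) (fun b => psupp (F b))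
    (fun a => sq_nonneg (lam a)) (fun b => sq_nonneg (kap b)) hL0 hL hFk fun _ => True
  simp only [and_true, if_true] at htouch
  calc ∑ q, ‖pauliCoeff (cm H G) q‖ ^ 2
      ≤ ∑ q, (2 * ∑ x ∈ anticommPairs E F with pairProd E F x = q, |lam x.1| * |kap x.2|) ^ 2 :=
        sum_le_sum fun q _ =>
          pow_le_pow_left₀ (norm_nonneg _) (norm_pauliCoeff_cm_le hH hG fun x hx _ => hx) 2
    _ = 4 * ∑ q, (∑ x ∈ anticommPairs E F with pairProd E F x = q, |lam x.1| * |kap x.2|) ^ 2 := by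
        rw [mul_sum]
        exact sum_congr rfl fun q _ => by ring
    _ ≤ 4 * ((2 * (k + k') + 1) ^ k * (4 * (k + k') + 1) ^ k * (k' * L * ∑ b, kap b ^ 2)) := by
        gcongr
        exact (sum_sq_sum_fiber_le hH.1 hG.1 hEk hFk lam kap _ _ hR).trans (by gcongr)
    _ = 4 * (2 * (k + k') + 1) ^ k * (4 * (k + k') + 1) ^ k * k' * (L * ∑ b, kap b ^ 2) := by
        ring
    _ ≤ _ := by
        gcongr
        exact le_add_of_nonneg_left (Nat.cast_nonneg k)

theorem sum_sum_ite_not_disjoint_mem_le (hEk : KLocal E k) (hFk : KLocal F k') (hL0 : 0 ≤ L)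
    (hl0 : 0 ≤ l) (hL : ∀ j, ∑ a, (if j ∈ psupp (E a) then lam a ^ 2 else 0) ≤ L)
    (hl : ∀ j, ∑ b, (if j ∈ psupp (F b) then kap b ^ 2 else 0) ≤ l) (i : Fin n) :
    ∑ a, ∑ b, (if ¬Disjoint (psupp (E a)) (psupp (F b)) ∧ (i ∈ psupp (E a) ∨ i ∈ psupp (F b))
      then lam a ^ 2 * kap b ^ 2 else 0) ≤ (k + k') * L * l := by
  have hE := sum_sum_ite_not_disjoint_le (fun b => psupp (F b)) (fun a => psupp (E a))
    (fun b => sq_nonneg (kap b)) (fun a => sq_nonneg (lam a)) hl0 hl hEk fun a => i ∈ psupp (E a)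
  have hF := sum_sum_ite_not_disjoint_le (fun a => psupp (E a)) (fun b => psupp (F b))
    (fun a => sq_nonneg (lam a)) (fun b => sq_nonneg (kap b)) hL0 hL hFk fun b => i ∈ psupp (F b)
  rw [sum_comm] at hE
  calc _ ≤ ∑ a, ∑ b, ((if ¬Disjoint (psupp (F b)) (psupp (E a)) ∧ i ∈ psupp (E a)
          then kap b ^ 2 * lam a ^ 2 else 0) + (if ¬Disjoint (psupp (E a)) (psupp (F b)) ∧
          i ∈ psupp (F b) then lam a ^ 2 * kap b ^ 2 else 0)) := by
        gcongr with a _ b _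
        by_cases hd : Disjoint (psupp (E a)) (psupp (F b))
        · simp [hd, hd.symm]
        · have hd' : ¬Disjoint (psupp (F b)) (psupp (E a)) := fun h => hd h.symm
          have hx : 0 ≤ lam a ^ 2 * kap b ^ 2 := by positivity
          by_cases hA : i ∈ psupp (E a) <;> by_cases hB : i ∈ psupp (F b) <;>
            simp [hd, hd', hA, hB, mul_comm (kap b ^ 2), hx]
    _ ≤ k * l * L + k' * L * l := by
        simp only [sum_add_distrib]
        exact add_le_add (hE.trans (by gcongr; exact hL i)) (hF.trans (by gcongr; exact hl i))
    _ = (k + k') * L * l := by ring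

theorem localWeight_cm_le (hH : IsHamiltonian lam E H) (hG : IsHamiltonian kap F G)
    (hEk : KLocal E k) (hFk : KLocal F k') (hL0 : 0 ≤ L) (hl0 : 0 ≤ l)
    (hL : ∀ j, ∑ a, (if j ∈ psupp (E a) then lam a ^ 2 else 0) ≤ L)
    (hl : ∀ j, ∑ b, (if j ∈ psupp (F b) then kap b ^ 2 else 0) ≤ l) (i : Fin n) :
    localWeight (cm H G) i
      ≤ 4 * (2 * (k + k') + 1) ^ k * (4 * (k + k') + 1) ^ k * (k + k') * (L * l) := by
  set P := (anticommPairs E F).filter fun x => i ∈ psupp (pairProd E F x)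
  have hR : ∀ x ∈ P, ∀ a, pairClass E F x ⊆ psupp (E a) →
      ¬Disjoint (psupp (E a)) (psupp (F x.2)) ∧ (i ∈ psupp (E a) ∨ i ∈ psupp (F x.2)) :=
    fun x hx a ha => by
      obtain ⟨hxA, hi⟩ := mem_filter.mp hx
      obtain ⟨j, hjx, hjF⟩ := exists_mem_pairClass_of_mem_anticommPairs E F hxA
      refine ⟨not_disjoint_iff.mpr ⟨j, ha hjx, hjF⟩, ?_⟩
      by_cases hiF : i ∈ psupp (F x.2)
      · exact Or.inr hiF
      · exact Or.inl (ha (mem_pairClass_of_notMem E F hi hiF))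
  calc localWeight (cm H G) i
      ≤ ∑ q, (2 * ∑ x ∈ P with pairProd E F x = q, |lam x.1| * |kap x.2|) ^ 2 := by
        refine sum_le_sum fun q _ => ?_
        split_ifs with hq
        · exact pow_le_pow_left₀ (norm_nonneg _) (norm_pauliCoeff_cm_le hH hG
            fun x hx hxq => mem_filter.mpr ⟨hx, hxq ▸ hq⟩) 2
        · positivity
    _ = 4 * ∑ q, (∑ x ∈ P with pairProd E F x = q, |lam x.1| * |kap x.2|) ^ 2 := by
        rw [mul_sum]
        exact sum_congr rfl fun q _ => by ring
    _ ≤ 4 * ((2 * (k + k') + 1) ^ k * (4 * (k + k') + 1) ^ k * ((k + k') * L * l)) := by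
        gcongr
        exact (sum_sq_sum_fiber_le hH.1 hG.1 hEk hFk lam kap _ _ hR).trans
          (by gcongr; exact sum_sum_ite_not_disjoint_mem_le hEk hFk hL0 hl0 hL hl i)
    _ = _ := by ring

end MainBounds

theorem commutator_constant_le {k k' : ℕ} (hk : 0 < k) :
    4 * (2 * (k + k') + 1) ^ k * (4 * (k + k') + 1) ^ k * (k + k')
      ≤ (2 * ((4 * (k' + k) : ℕ) : ℝ) ^ (3 * k)) ^ 2 := by
  have ht : 1 ≤ k' + k := by omega
  have key : (2 * (k' + k) + 1) ^ k * (4 * (k' + k) + 1) ^ k * (k' + k)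
      ≤ (4 * (k' + k)) ^ (6 * k) := by
    set t := k' + k
    calc (2 * t + 1) ^ k * (4 * t + 1) ^ k * t
        ≤ (4 * t) ^ k * ((4 * t) ^ 2) ^ k * (4 * t) ^ k := by
          gcongr
          · omega
          · nlinarith
          · exact (Nat.le_mul_of_pos_left t (by norm_num)).trans (Nat.le_self_pow hk.ne' _)
      _ = (4 * t) ^ (4 * k) := by rw [← pow_mul, ← pow_add, ← pow_add]; ring_nf
      _ ≤ (4 * t) ^ (6 * k) := Nat.pow_le_pow_right (by omega) (by omega)
  have hkey : ((2 * (k' + k) + 1) ^ k * (4 * (k' + k) + 1) ^ k * (k' + k) : ℝ)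
      ≤ ((4 * (k' + k) : ℕ) : ℝ) ^ (6 * k) := by
    exact_mod_cast key
  calc 4 * (2 * (k + k') + 1) ^ k * (4 * (k + k') + 1) ^ k * (k + k')
      = 4 * ((2 * (k' + k) + 1) ^ k * (4 * (k' + k) + 1) ^ k * (k' + k) : ℝ) := by ring
    _ ≤ 4 * ((4 * (k' + k) : ℕ) : ℝ) ^ (6 * k) := by gcongr
    _ = (2 * ((4 * (k' + k) : ℕ) : ℝ) ^ (3 * k)) ^ 2 := by ring

/-- Lemma 3.5: L²-local-norm commutator bound. -/
theorem l2_local_norm_commutator_bound :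
    ∃ C : ℝ, 0 < C ∧
      ∀ (n m m' k k' : ℕ) (lam : Fin m → ℝ) (kap : Fin m' → ℝ)
        (E : Fin m → Fin n → Fin 4) (F : Fin m' → Fin n → Fin 4) (H G : QMat n),
        IsHamiltonian lam E H → KLocal E k →
        IsHamiltonian kap F G → KLocal F k' →
        frobNorm (cm H G) ≤ C * ((4 * (k' + k) : ℕ) : ℝ) ^ (3 * k) * ltnorm H * frobNorm G ∧
        ltnorm (cm H G) ≤ C * ((4 * (k' + k) : ℕ) : ℝ) ^ (3 * k) * ltnorm H * ltnorm G := by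
  refine ⟨2, two_pos, fun n m m' k k' lam kap E F H G hH hEk hG hFk => ?_⟩
  rcases Nat.eq_zero_or_pos k with rfl | hk
  · simp [hH.eq_zero_of_kLocal_zero hEk, cm, frobNorm, ltnorm, pauliCoeff]
  set C := 2 * ((4 * (k' + k) : ℕ) : ℝ) ^ (3 * k)
  have hC0 : 0 ≤ C := by positivity
  have hC := commutator_constant_le (k' := k') hk
  have hL j := hH.localWeight_eq j ▸ localWeight_le_ltnorm_sq H j
  have hl j := hG.localWeight_eq j ▸ localWeight_le_ltnorm_sq G j
  constructor
  · refine (pow_le_pow_iff_left₀ (Real.sqrt_nonneg _)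
      (mul_nonneg (mul_nonneg hC0 (ltnorm_nonneg H)) (Real.sqrt_nonneg _)) two_ne_zero).mp ?_
    calc frobNorm (cm H G) ^ 2 = 2 ^ n * ∑ q, ‖pauliCoeff (cm H G) q‖ ^ 2 :=
          frobNorm_sq_eq (cm_eq_sum hH hG)
      _ ≤ 2 ^ n * (C ^ 2 * (ltnorm H ^ 2 * ∑ b, kap b ^ 2)) := by
          gcongr
          exact (sum_norm_sq_pauliCoeff_cm_le hH hG hEk hFk (sq_nonneg _) hL).trans (by gcongr)
      _ = (C * ltnorm H * frobNorm G) ^ 2 := by rw [mul_pow, mul_pow, hG.frobNorm_sq]; ring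
  · refine ltnorm_le (mul_nonneg (mul_nonneg hC0 (ltnorm_nonneg H)) (ltnorm_nonneg G)) fun i => ?_
    calc localWeight (cm H G) i ≤ C ^ 2 * (ltnorm H ^ 2 * ltnorm G ^ 2) :=
          (localWeight_cm_le hH hG hEk hFk (sq_nonneg _) (sq_nonneg _) hL hl i).trans (by gcongr)
      _ = (C * ltnorm H * ltnorm G) ^ 2 := by ring
end
end

section
/- Observable-based Trotter error expansion (Lemma 4.1). Let X, H, H₀ be Hermitian N×N complex matrices and t ∈ ℝ. Then e^{−iH₀t} e^{iHt} X e^{−iHt} e^{iH₀t} − e^{i(H−H₀)t} X e^{−i(H−H₀)t} = Σ_{ℓ≥2} ((it)^ℓ/ℓ!)·C_ℓ, where the series converges absolutely and, for each ℓ ≥ 2, there exist an integer m_ℓ ≤ 2^ℓ·ℓ², signs c_1,…,c_{m_ℓ} ∈ {−1,1}, and bit-strings S_1,T_1,…,S_{m_ℓ},T_{m_ℓ} with len(S_j) + len(T_j) = ℓ − 2 for each j, such that C_ℓ = Σ_{j=1}^{m_ℓ} c_j · [(−H₀, H)_{S_j}, [[−H₀, H], [(−H₀, H)_{T_j}, X]]].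 In particular each summand of C_ℓ is an order-(ℓ−1) nested commutator of copies of −H₀ and H together with one copy of [−H₀, H], with X in the center. -/
open Complex Matrix
open scoped BigOperators

noncomputable section

/-- The bivariate nested commutator `[(X,Y)_S, A]`: bit `false` (`0`) selects `X`, and bit
`true` (`1`) selects `Y`; the first entry of the list is the outermost commutator. -/
def bivComm {α : Type*} [Ring α] (X Y : α) : List Bool → α → α
  | [], A => A
  | b :: S, A => cm (if b then Y else X) (bivComm X Y S A)

/-!
Write `P = ad A`, `Q = ad B` for the commutator maps `Y ↦ [A, Y]`, `Y ↦ [B, Y]`. Conjugation by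
`exp (u A)` is `exp (u P)`, so the difference of the two conjugated observables is
`(exp (u P) exp (u Q) - exp (u (P + Q))) X`, and the Cauchy product gives its degree-`n`
coefficient `D n = S n - (P + Q) ^ n`, where `S n = ∑ C(n, i) P^i Q^(n-i)` is the binomial sum
computed as if `P` and `Q` commuted. Pascal's rule `S (n+1) = P S n + S n Q` gives
`D (n+1) = P D n + Q D n + (S n Q - Q S n)`, and `P^i Q - Q P^i = ∑_{k<i} P^k [P, Q] P^(i-1-k)`,
so `D n` is a sum of at most `2^n n^2` words `w₁ [P, Q] w₂` with `|w₁| + |w₂| = n - 2`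
(the count satisfies `m (n+1) ≤ 2 m n + n 2^n`). Finally `[P, Q] = ad [A, B]`, and a word in
`P`, `Q` applied to `Y` is a nested commutator. The theorem is the case `A = -H₀`, `B = H`,
`u = i t` in the matrix algebra with the Frobenius norm.
-/

open Finset
open scoped Nat

section Words

variable {α : Type*} [Ring α] (P Q : α)

def word (s : List Bool) : α := (s.map fun b => if b then Q else P).prod

@[simp] lemma word_nil : word P Q [] = 1 := rfl

@[simp] lemma word_cons (b : Bool) (s : List Bool) :
    word P Q (b :: s) = (if b then Q else P) * word P Q s := rfl

lemma word_singleton (b : Bool) : word P Q [b] = if b then Q else P := mul_one _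

lemma word_append (s t : List Bool) : word P Q (s ++ t) = word P Q s * word P Q t := by
  simp [word]

lemma word_replicate_false (k : ℕ) : word P Q (List.replicate k false) = P ^ k := by
  simp [word]

lemma word_replicate_true (k : ℕ) : word P Q (List.replicate k true) = Q ^ k := by
  simp [word]

def IsCommWordSum (n m : ℕ) (x : α) : Prop :=
  ∃ L : List (List Bool × List Bool), L.length ≤ m ∧
    (∀ p ∈ L, p.1.length + p.2.length + 2 = n) ∧
    x = (L.map fun p => word P Q p.1 * cm P Q * word P Q p.2).sum

lemma isCommWordSum_cm : IsCommWordSum P Q 2 1 (cm P Q) :=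
  ⟨[([], [])], by simp, by simp, by simp⟩

namespace IsCommWordSum

variable {P Q} {n m m' : ℕ} {x y : α}

lemma zero : IsCommWordSum P Q n m 0 := ⟨[], by simp, by simp, by simp⟩

lemma mono (h : IsCommWordSum P Q n m x) (hm : m ≤ m') : IsCommWordSum P Q n m' x :=
  let ⟨L, hL, hdeg, hx⟩ := h
  ⟨L, hL.trans hm, hdeg, hx⟩

lemma add (hx : IsCommWordSum P Q n m x) (hy : IsCommWordSum P Q n m' y) :
    IsCommWordSum P Q n (m + m') (x + y) := by
  obtain ⟨L, hL, hLdeg, rfl⟩ := hx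
  obtain ⟨M, hM, hMdeg, rfl⟩ := hy
  refine ⟨L ++ M, by simp; omega, ?_, by simp⟩
  simp only [List.mem_append]
  rintro p (hp | hp)
  exacts [hLdeg p hp, hMdeg p hp]

lemma nsmul (hx : IsCommWordSum P Q n m x) (c : ℕ) : IsCommWordSum P Q n (c * m) (c • x) := by
  induction c with
  | zero => simpa using zero
  | succ c ih => simpa [succ_nsmul, add_mul] using ih.add hx

lemma sum {ι : Type*} {s : Finset ι} {f : ι → α} {m : ι → ℕ}
    (h : ∀ i ∈ s, IsCommWordSum P Q n (m i) (f i)) :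
    IsCommWordSum P Q n (∑ i ∈ s, m i) (∑ i ∈ s, f i) := by
  classical
  induction s using Finset.induction_on with
  | empty => simpa using zero
  | insert i s hi ih =>
    rw [sum_insert hi, sum_insert hi]
    exact (h i (mem_insert_self i s)).add (ih fun j hj => h j (mem_insert_of_mem hj))

lemma word_mul (hx : IsCommWordSum P Q n m x) (s : List Bool) {n' : ℕ}
    (h : s.length + n = n') : IsCommWordSum P Q n' m (word P Q s * x) := by
  obtain ⟨L, hL, hdeg, rfl⟩ := hx
  refine ⟨L.map fun p => (s ++ p.1, p.2), by simpa using hL, ?_, ?_⟩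
  · simp only [List.mem_map]
    rintro _ ⟨p, hp, rfl⟩
    simp only [List.length_append]
    have := hdeg p hp
    omega
  · simp [List.sum_map_mul_left, word_append, mul_assoc, Function.comp_def]

lemma mul_word (hx : IsCommWordSum P Q n m x) (s : List Bool) {n' : ℕ}
    (h : n + s.length = n') : IsCommWordSum P Q n' m (x * word P Q s) := by
  obtain ⟨L, hL, hdeg, rfl⟩ := hx
  refine ⟨L.map fun p => (p.1, p.2 ++ s), by simpa using hL, ?_, ?_⟩
  · simp only [List.mem_map]
    rintro _ ⟨p, hp, rfl⟩
    simp only [List.length_append]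
    have := hdeg p hp
    omega
  · simp [← List.sum_map_mul_right, word_append, mul_assoc, Function.comp_def]

lemma eq_zero_of_lt_two (hx : IsCommWordSum P Q n m x) (hn : n < 2) : x = 0 := by
  obtain ⟨L, -, hdeg, rfl⟩ := hx
  cases L with
  | nil => rfl
  | cons p L => have := hdeg p List.mem_cons_self; omega

end IsCommWordSum

end Words

section BinomialSum

variable {α : Type*} [Ring α] (P Q : α)

def binomialSum (n : ℕ) : α := ∑ ij ∈ antidiagonal n, n.choose ij.1 • (P ^ ij.1 * Q ^ ij.2)

@[simp] lemma binomialSum_zero : binomialSum P Q 0 = 1 := by simp [binomialSum]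

lemma binomialSum_succ (n : ℕ) :
    binomialSum P Q (n + 1) = binomialSum P Q n * Q + P * binomialSum P Q n := by
  rw [binomialSum, sum_antidiagonal_choose_succ_nsmul (fun i j => P ^ i * Q ^ j), binomialSum,
    sum_mul, mul_sum]
  congr 1
  · refine sum_congr rfl fun ij _ => ?_
    rw [smul_mul_assoc, mul_assoc, ← pow_succ]
  · refine sum_congr rfl fun ij hij => ?_
    rw [mul_smul_comm, ← mul_assoc, ← pow_succ',
      Nat.choose_symm_of_eq_add (mem_antidiagonal.1 hij).symm]

lemma binomialSum_smul {𝕂 : Type*} [CommSemiring 𝕂] [Algebra 𝕂 α] (u : 𝕂) (n : ℕ) :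
    binomialSum (u • P) (u • Q) n = u ^ n • binomialSum P Q n := by
  rw [binomialSum, binomialSum, smul_sum]
  refine sum_congr rfl fun ij hij => ?_
  rw [smul_pow, smul_pow, smul_mul_smul_comm, ← pow_add, mem_antidiagonal.1 hij, smul_comm]

lemma binomialSum_mul_sub_mul_binomialSum (n : ℕ) :
    binomialSum P Q n * Q - Q * binomialSum P Q n =
      ∑ ij ∈ antidiagonal n, n.choose ij.1 • ((P ^ ij.1 * Q - Q * P ^ ij.1) * Q ^ ij.2) := by
  rw [binomialSum, sum_mul, mul_sum, ← sum_sub_distrib]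
  refine sum_congr rfl fun ij _ => ?_
  rw [smul_mul_assoc, mul_smul_comm, ← smul_sub, sub_mul, mul_assoc, mul_assoc, mul_assoc,
    ← pow_succ, pow_succ']

lemma binomialSum_sub_add_pow_succ (n : ℕ) :
    binomialSum P Q (n + 1) - (P + Q) ^ (n + 1) =
      P * (binomialSum P Q n - (P + Q) ^ n) + Q * (binomialSum P Q n - (P + Q) ^ n) +
        (binomialSum P Q n * Q - Q * binomialSum P Q n) := by
  rw [binomialSum_succ, pow_succ']
  noncomm_ring

lemma isCommWordSum_pow_mul_sub_mul_pow (k : ℕ) :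
    IsCommWordSum P Q (k + 1) k (P ^ k * Q - Q * P ^ k) := by
  induction k with
  | zero => simpa using IsCommWordSum.zero
  | succ k ih =>
    have h := (ih.word_mul [false] (n' := k + 2) (by simp; omega)).add
      ((isCommWordSum_cm P Q).mul_word (List.replicate k false) (by simp; omega))
    simp only [word_singleton, Bool.false_eq_true, ↓reduceIte, word_replicate_false] at h
    convert h using 1
    rw [pow_succ', cm]
    noncomm_ring

lemma isCommWordSum_binomialSum_mul_sub_mul_binomialSum (n : ℕ) :
    IsCommWordSum P Q (n + 1) (2 ^ n * n) (binomialSum P Q n * Q - Q * binomialSum P Q n) := by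
  rw [binomialSum_mul_sub_mul_binomialSum]
  have h := IsCommWordSum.sum (n := n + 1) (s := antidiagonal n) fun ij hij =>
    ((isCommWordSum_pow_mul_sub_mul_pow P Q ij.1).mul_word (List.replicate ij.2 true)
      (by simp; linarith [mem_antidiagonal.1 hij])).nsmul (n.choose ij.1)
  simp only [word_replicate_true] at h
  refine h.mono ?_
  calc ∑ ij ∈ antidiagonal n, n.choose ij.1 * ij.1
      ≤ ∑ ij ∈ antidiagonal n, n.choose ij.1 * n := by
        gcongr with ij hij
        exact (mem_antidiagonal.1 hij) ▸ Nat.le_add_right _ _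
    _ = 2 ^ n * n := by
        rw [← sum_mul, Nat.sum_antidiagonal_eq_sum_range_succ_mk, Nat.sum_range_choose]

theorem isCommWordSum_binomialSum_sub_add_pow (n : ℕ) :
    IsCommWordSum P Q n (2 ^ n * n ^ 2) (binomialSum P Q n - (P + Q) ^ n) := by
  induction n with
  | zero => simpa using IsCommWordSum.zero
  | succ n ih =>
    rw [binomialSum_sub_add_pow_succ]
    have h := ((ih.word_mul [false] (by simp; omega)).add
      (ih.word_mul [true] (by simp; omega))).add
        (isCommWordSum_binomialSum_mul_sub_mul_binomialSum P Q n)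
    simp only [word_singleton, Bool.false_eq_true, ↓reduceIte] at h
    refine h.mono ?_
    have : 0 < 2 ^ n := by positivity
    ring_nf
    nlinarith

end BinomialSum

section Normed

open NormedSpace

lemma norm_binomialSum_le {α : Type*} [NormedRing α] [NormOneClass α] (P Q : α) (n : ℕ) :
    ‖binomialSum P Q n‖ ≤ (‖P‖ + ‖Q‖) ^ n := by
  rw [binomialSum, (Commute.all ‖P‖ ‖Q‖).add_pow']
  refine (norm_sum_le _ _).trans (sum_le_sum fun ij _ => norm_nsmul_le.trans ?_)
  rw [nsmul_eq_mul]
  gcongr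
  exact (norm_mul_le _ _).trans (by gcongr <;> exact norm_pow_le _ _)

lemma norm_binomialSum_sub_add_pow_le {α : Type*} [NormedRing α] [NormOneClass α] (P Q : α)
    (n : ℕ) : ‖binomialSum P Q n - (P + Q) ^ n‖ ≤ 2 * (‖P‖ + ‖Q‖) ^ n := by
  refine (norm_sub_le _ _).trans ?_
  rw [two_mul]
  gcongr
  · exact norm_binomialSum_le P Q n
  · exact (norm_pow_le _ _).trans (by gcongr; exact norm_add_le _ _)

variable {𝕂 𝔸 : Type*} [RCLike 𝕂] [NormedRing 𝔸] [NormedAlgebra 𝕂 𝔸] [CompleteSpace 𝔸]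

lemma hasSum_binomialSum_exp_mul_exp (P Q : 𝔸) :
    HasSum (fun n => (n !⁻¹ : 𝕂) • binomialSum P Q n) (exp P * exp Q) := by
  have hP := norm_expSeries_summable' (𝕂 := 𝕂) P
  have hQ := norm_expSeries_summable' (𝕂 := 𝕂) Q
  convert (summable_sum_mul_antidiagonal_of_summable_norm' hP hP.of_norm hQ hQ.of_norm).hasSum
    using 1
  · funext n
    rw [binomialSum, smul_sum]
    refine sum_congr rfl fun ij hij => ?_
    obtain ⟨i, j⟩ := ij
    obtain rfl : i + j = n := mem_antidiagonal.1 hij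
    rw [smul_mul_smul_comm, ← Nat.cast_smul_eq_nsmul 𝕂, smul_smul, Nat.cast_add_choose]
    congr 1
    rw [← mul_div_assoc, inv_mul_cancel₀ (by exact_mod_cast Nat.factorial_ne_zero _), one_div,
      mul_inv]
  · rw [← tsum_mul_tsum_eq_tsum_sum_antidiagonal_of_summable_norm hP hQ,
      (exp_series_hasSum_exp' P).tsum_eq, (exp_series_hasSum_exp' Q).tsum_eq]

lemma hasSum_binomialSum_sub_add_pow (u : 𝕂) (P Q : 𝔸) :
    HasSum (fun n => (u ^ n / n !) • (binomialSum P Q n - (P + Q) ^ n))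
      (exp (u • P) * exp (u • Q) - exp (u • (P + Q))) := by
  have h := (hasSum_binomialSum_exp_mul_exp (𝕂 := 𝕂) (u • P) (u • Q)).sub
    (exp_series_hasSum_exp' (𝕂 := 𝕂) (u • (P + Q)))
  simp only [binomialSum_smul, smul_pow, smul_smul, ← smul_sub] at h
  simpa only [div_eq_inv_mul] using h

end Normed

section Ad

open NormedSpace ContinuousLinearMap

variable {𝕂 : Type*} [RCLike 𝕂] {𝔸 : Type*} [NormedRing 𝔸] [NormedAlgebra 𝕂 𝔸]

lemma exp_apply_eq_of_pow_apply [CompleteSpace 𝔸] {E : Type*} [NormedAddCommGroup E]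
    [NormedSpace 𝕂 E] [CompleteSpace E] (T : E →L[𝕂] E) (y : E) (f : 𝔸 →L[𝕂] E) (a : 𝔸)
    (h : ∀ n, (T ^ n) y = f (a ^ n)) : exp T y = f (exp a) := by
  have hT := (exp_series_hasSum_exp' (𝕂 := 𝕂) T).mapL (apply 𝕂 E y)
  simp only [apply_apply, _root_.smul_apply, h, ← map_smul] at hT
  exact hT.unique ((exp_series_hasSum_exp' (𝕂 := 𝕂) a).mapL f)

lemma exp_mul_apply [CompleteSpace 𝔸] (a y : 𝔸) : exp (mul 𝕂 𝔸 a) y = exp a * y :=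
  exp_apply_eq_of_pow_apply _ y ((mul 𝕂 𝔸).flip y) a fun n => by
    induction n with
    | zero => simp
    | succ n ih => rw [pow_succ', mul_apply_eq_comp, ih]; simp [pow_succ', mul_assoc]

lemma exp_flip_mul_apply [CompleteSpace 𝔸] (a y : 𝔸) :
    exp ((mul 𝕂 𝔸).flip a) y = y * exp a :=
  exp_apply_eq_of_pow_apply _ y (mul 𝕂 𝔸 y) a fun n => by
    induction n with
    | zero => simp
    | succ n ih => rw [pow_succ', mul_apply_eq_comp, ih]; simp [pow_succ, mul_assoc]

variable (𝕂) in
def ad (a : 𝔸) : 𝔸 →L[𝕂] 𝔸 := mul 𝕂 𝔸 a - (mul 𝕂 𝔸).flip a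

@[simp] lemma ad_apply (a y : 𝔸) : ad 𝕂 a y = cm a y := rfl

lemma ad_add (a b : 𝔸) : ad 𝕂 (a + b) = ad 𝕂 a + ad 𝕂 b := by
  ext y
  simp only [ad_apply, _root_.add_apply, cm]
  noncomm_ring

lemma ad_smul (u : 𝕂) (a : 𝔸) : ad 𝕂 (u • a) = u • ad 𝕂 a := by
  ext y
  simp [cm, smul_sub]

lemma cm_ad_ad (a b : 𝔸) : cm (ad 𝕂 a) (ad 𝕂 b) = ad 𝕂 (cm a b) := by
  ext y
  simp only [cm, _root_.sub_apply, mul_apply_eq_comp, ad_apply]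
  noncomm_ring

lemma word_ad_apply (a b y : 𝔸) (s : List Bool) :
    word (ad 𝕂 a) (ad 𝕂 b) s y = bivComm a b s y := by
  induction s with
  | nil => rfl
  | cons c s ih => cases c <;> simp [bivComm, mul_apply_eq_comp, ih]

lemma exp_ad_apply [CompleteSpace 𝔸] (a y : 𝔸) : exp (ad 𝕂 a) y = exp a * y * exp (-a) := by
  have hsplit : ad 𝕂 a = mul 𝕂 𝔸 a + (mul 𝕂 𝔸).flip (-a) := by
    ext z
    simp [cm, sub_eq_add_neg]
  have hcomm : Commute (mul 𝕂 𝔸 a) ((mul 𝕂 𝔸).flip (-a)) := by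
    ext z
    simp [mul_assoc]
  have hmem : ∀ T : 𝔸 →L[𝕂] 𝔸, T ∈ Metric.eball 0 (expSeries 𝕂 (𝔸 →L[𝕂] 𝔸)).radius := by
    simp [expSeries_radius_eq_top]
  rw [hsplit, exp_add_of_commute_of_mem_ball hcomm (hmem _) (hmem _), mul_apply_eq_comp,
    exp_flip_mul_apply, exp_mul_apply, mul_assoc]

lemma exists_list_sum_bivComm_eq (A B X : 𝔸) (n : ℕ) :
    ∃ L : List (List Bool × List Bool), L.length ≤ 2 ^ n * n ^ 2 ∧
      (∀ p ∈ L, p.1.length + p.2.length + 2 = n) ∧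
      (binomialSum (ad 𝕂 A) (ad 𝕂 B) n - (ad 𝕂 A + ad 𝕂 B) ^ n) X =
        (L.map fun p => bivComm A B p.1 (cm (cm A B) (bivComm A B p.2 X))).sum := by
  obtain ⟨L, hL, hdeg, h⟩ := isCommWordSum_binomialSum_sub_add_pow (ad 𝕂 A) (ad 𝕂 B) n
  refine ⟨L, hL, hdeg, ?_⟩
  rw [h, ← apply_apply (𝕜 := 𝕂) X, map_list_sum, List.map_map]
  congr 1
  refine List.map_congr_left fun p _ => ?_
  simp only [Function.comp_apply, apply_apply, mul_apply_eq_comp, word_ad_apply, cm_ad_ad,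
    ad_apply]

theorem summable_pow_div_factorial_mul_norm (r : ℝ) (A B X : 𝔸) :
    Summable fun n =>
      r ^ n / n ! * ‖(binomialSum (ad 𝕂 A) (ad 𝕂 B) n - (ad 𝕂 A + ad 𝕂 B) ^ n) X‖ := by
  -- so that `NormOneClass (𝔸 →L[𝕂] 𝔸)` holds
  nontriviality 𝔸
  refine .of_norm_bounded
    ((Real.summable_pow_div_factorial (|r| * (‖ad 𝕂 A‖ + ‖ad 𝕂 B‖))).mul_left (2 * ‖X‖))
    fun n => ?_
  rw [norm_mul, norm_div, norm_pow, Real.norm_eq_abs, Real.norm_natCast, norm_norm, mul_pow]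
  calc |r| ^ n / n ! * ‖(binomialSum (ad 𝕂 A) (ad 𝕂 B) n - (ad 𝕂 A + ad 𝕂 B) ^ n) X‖
      ≤ |r| ^ n / n ! * (2 * (‖ad 𝕂 A‖ + ‖ad 𝕂 B‖) ^ n * ‖X‖) := by
        gcongr
        exact (le_opNorm _ _).trans (by gcongr; exact norm_binomialSum_sub_add_pow_le _ _ n)
    _ = 2 * ‖X‖ * (|r| ^ n * (‖ad 𝕂 A‖ + ‖ad 𝕂 B‖) ^ n / n !) := by ring

theorem hasSum_conj_exp_mul_exp_sub_conj_exp_add [CompleteSpace 𝔸] (u : 𝕂) (A B X : 𝔸) :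
    HasSum
      (fun n => (u ^ n / n !) • (binomialSum (ad 𝕂 A) (ad 𝕂 B) n - (ad 𝕂 A + ad 𝕂 B) ^ n) X)
      (exp (u • A) * exp (u • B) * X * exp (-(u • B)) * exp (-(u • A)) -
        exp (u • (A + B)) * X * exp (-(u • (A + B)))) := by
  have h := (hasSum_binomialSum_sub_add_pow u (ad 𝕂 A) (ad 𝕂 B)).mapL (apply 𝕂 𝔸 X)
  rw [← ad_add, ← ad_smul, ← ad_smul, ← ad_smul] at h
  simpa only [apply_apply, _root_.smul_apply, _root_.sub_apply, mul_apply_eq_comp, exp_ad_apply,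
    ad_add, mul_assoc] using h

end Ad

section Frobenius

attribute [local instance] Matrix.frobeniusNormedRing

lemma frobNorm_eq_norm {m : Type*} [Fintype m] [DecidableEq m] (M : Matrix m m ℂ) :
    frobNorm M = ‖M‖ := by
  rw [frobNorm, Matrix.frobenius_norm_def, Real.sqrt_eq_rpow, one_div]
  simp only [Real.rpow_two]

end Frobenius

theorem observable_based_trotter_error_general {N : ℕ} (X H H0 : Matrix (Fin N) (Fin N) ℂ)
    (t : ℝ) :
    ∃ C : ℕ → Matrix (Fin N) (Fin N) ℂ,
      HasSum
        (fun ℓ : ℕ =>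
          if 2 ≤ ℓ then ((Complex.I * (t : ℂ)) ^ ℓ / (Nat.factorial ℓ : ℂ)) • C ℓ else 0)
        (mexp ((-(Complex.I * (t : ℂ))) • H0) * mexp ((Complex.I * (t : ℂ)) • H) * X *
            mexp ((-(Complex.I * (t : ℂ))) • H) * mexp ((Complex.I * (t : ℂ)) • H0)
          - mexp ((Complex.I * (t : ℂ)) • (H - H0)) * X *
            mexp ((-(Complex.I * (t : ℂ))) • (H - H0))) ∧
      Summable
        (fun ℓ : ℕ =>
          if 2 ≤ ℓ then |t| ^ ℓ / (Nat.factorial ℓ : ℝ) * frobNorm (C ℓ) else 0) ∧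
      ∀ ℓ, 2 ≤ ℓ →
        ∃ mℓ : ℕ, mℓ ≤ 2 ^ ℓ * ℓ ^ 2 ∧
          ∃ (c : Fin mℓ → ℝ) (Sl Tl : Fin mℓ → List Bool),
            (∀ j, c j = 1 ∨ c j = -1) ∧
            (∀ j, (Sl j).length + (Tl j).length = ℓ - 2) ∧
            C ℓ = ∑ j, c j •
              bivComm (-H0) H (Sl j) (cm (cm (-H0) H) (bivComm (-H0) H (Tl j) X)) := by
  -- The Frobenius norm induces the product topology, so these instances leave `HasSum` unchanged.
  let := Matrix.frobeniusNormedRing (m := Fin N) (α := ℂ)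
  let := Matrix.frobeniusNormedAlgebra (m := Fin N) (α := ℂ) (R := ℂ)
  set u : ℂ := Complex.I * t
  set C : ℕ → Matrix (Fin N) (Fin N) ℂ := fun n =>
    (binomialSum (ad ℂ (-H0)) (ad ℂ H) n - (ad ℂ (-H0) + ad ℂ H) ^ n) X
  have hC : ∀ ℓ, ℓ < 2 → C ℓ = 0 := fun ℓ hℓ => by
    simp only [C, _root_.zero_apply,
      (isCommWordSum_binomialSum_sub_add_pow (ad ℂ (-H0)) (ad ℂ H) ℓ).eq_zero_of_lt_two hℓ]
  refine ⟨C, ?_, ?_, fun ℓ _ => ?_⟩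
  · have hif : (fun ℓ => if 2 ≤ ℓ then (u ^ ℓ / ℓ !) • C ℓ else 0) =
        fun ℓ => (u ^ ℓ / ℓ !) • C ℓ :=
      funext fun ℓ => by
        split_ifs with hℓ
        · rfl
        · rw [hC ℓ (by omega), smul_zero]
    have h := hasSum_conj_exp_mul_exp_sub_conj_exp_add u (-H0) H X
    simp only [smul_neg, neg_neg, neg_add_eq_sub] at h
    simp only [hif, mexp, neg_smul]
    exact h
  · refine (summable_pow_div_factorial_mul_norm (𝕂 := ℂ) |t| (-H0) H X).congr fun ℓ => ?_
    show |t| ^ ℓ / ℓ ! * ‖C ℓ‖ = _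
    split_ifs with hℓ
    · rw [frobNorm_eq_norm]
    · rw [hC ℓ (by omega), norm_zero, mul_zero]
  · obtain ⟨L, hL, hdeg, hCL⟩ := exists_list_sum_bivComm_eq (𝕂 := ℂ) (-H0) H X ℓ
    refine ⟨L.length, hL, fun _ => 1, fun j => L[j.1].1, fun j => L[j.1].2, fun _ => .inl rfl,
      fun j => by have := hdeg _ (L.getElem_mem j.2); dsimp only; omega, ?_⟩
    simp only [one_smul, C, hCL]
    exact (Fin.sum_univ_fun_getElem L _).symm

/-- Lemma 4.1: observable-based Trotter error expansion. -/
theorem observable_based_trotter_error {N : ℕ} (X H H0 : Matrix (Fin N) (Fin N) ℂ)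
    (hX : X.IsHermitian) (hH : H.IsHermitian) (hH0 : H0.IsHermitian) (t : ℝ) :
    ∃ C : ℕ → Matrix (Fin N) (Fin N) ℂ,
      HasSum
        (fun ℓ : ℕ =>
          if 2 ≤ ℓ then ((Complex.I * (t : ℂ)) ^ ℓ / (Nat.factorial ℓ : ℂ)) • C ℓ else 0)
        (mexp ((-(Complex.I * (t : ℂ))) • H0) * mexp ((Complex.I * (t : ℂ)) • H) * X *
            mexp ((-(Complex.I * (t : ℂ))) • H) * mexp ((Complex.I * (t : ℂ)) • H0)
          - mexp ((Complex.I * (t : ℂ)) • (H - H0)) * X *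
            mexp ((-(Complex.I * (t : ℂ))) • (H - H0))) ∧
      Summable
        (fun ℓ : ℕ =>
          if 2 ≤ ℓ then |t| ^ ℓ / (Nat.factorial ℓ : ℝ) * frobNorm (C ℓ) else 0) ∧
      ∀ ℓ, 2 ≤ ℓ →
        ∃ mℓ : ℕ, mℓ ≤ 2 ^ ℓ * ℓ ^ 2 ∧
          ∃ (c : Fin mℓ → ℝ) (Sl Tl : Fin mℓ → List Bool),
            (∀ j, c j = 1 ∨ c j = -1) ∧
            (∀ j, (Sl j).length + (Tl j).length = ℓ - 2) ∧
            C ℓ = ∑ j, c j •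
              bivComm (-H0) H (Sl j) (cm (cm (-H0) H) (bivComm (-H0) H (Tl j) X)) :=
  observable_based_trotter_error_general X H H0 t
end
end
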